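/- The Laurent polynomials Δ_G = 24 − 5(x + x^{-1} + y + y^{-1} + u + u^{-1} + v + v^{-1}) + Σ (products as in the previous statement) and Δ_{G*} = 8 − x − x^{-1} − y − y^{-1} − u − u^{-1} − v − v^{-1} in ℤ[x^{±1}, y^{±1}, u^{±1}, v^{±1}] satisfy Δ_G ≠ ± Δ_{G*}. -/

import Mathlib

/-!
The constant term already separates the two polynomials: it is `24` for `Δ_G` and `8` for
`Δ_{G*}`, since every other monomial of either polynomial has a nonzero exponent vector.
-/

/-- The Laurent polynomial ring `Λ = ℤ[x^{±1}, y^{±1}, u^{±1}, v^{±1}]`,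
realized as the group ring of `ℤ⁴` over `ℤ`. -/
abbrev Lau4 : Type := AddMonoidAlgebra ℤ (ℤ × ℤ × ℤ × ℤ)

noncomputable def X : Lau4 := AddMonoidAlgebra.single ((1, 0, 0, 0) : ℤ × ℤ × ℤ × ℤ) 1
noncomputable def X' : Lau4 := AddMonoidAlgebra.single ((-1, 0, 0, 0) : ℤ × ℤ × ℤ × ℤ) 1
noncomputable def Y : Lau4 := AddMonoidAlgebra.single ((0, 1, 0, 0) : ℤ × ℤ × ℤ × ℤ) 1
noncomputable def Y' : Lau4 := AddMonoidAlgebra.single ((0, -1, 0, 0) : ℤ × ℤ × ℤ × ℤ) 1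
noncomputable def U : Lau4 := AddMonoidAlgebra.single ((0, 0, 1, 0) : ℤ × ℤ × ℤ × ℤ) 1
noncomputable def U' : Lau4 := AddMonoidAlgebra.single ((0, 0, -1, 0) : ℤ × ℤ × ℤ × ℤ) 1
noncomputable def V : Lau4 := AddMonoidAlgebra.single ((0, 0, 0, 1) : ℤ × ℤ × ℤ × ℤ) 1
noncomputable def V' : Lau4 := AddMonoidAlgebra.single ((0, 0, 0, -1) : ℤ × ℤ × ℤ × ℤ) 1

/-- The Laplacian polynomial `Δ_G` of the signed graph in the genus-2
surface. -/
noncomputable def DG : Lau4 :=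
  24 - 5 * (X + X' + Y + Y' + U + U' + V + V')
    + (U * X + U' * X' + U * X' + U' * X)
    + (V * X + V' * X' + V * X' + V' * X)
    + (U * Y + U' * Y' + U * Y' + U' * Y)
    + (V * Y + V' * Y' + V * Y' + V' * Y)

/-- The Laplacian polynomial of the dual graph. -/
noncomputable def DGstar : Lau4 := 8 - X - X' - Y - Y' - U - U' - V - V'

theorem ne_and_ne_neg_of_abs_coeff_ne {R M : Type*} [Ring R] [Lattice R]
    {f g : AddMonoidAlgebra R M} {m : M} (h : |f.coeff m| ≠ |g.coeff m|) :
    f ≠ g ∧ f ≠ -g := by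
  constructor <;> rintro rfl <;> simp at h

theorem coeff_DG_zero : DG.coeff 0 = 24 := by
  simp [DG, X, X', Y, Y', U, U', V, V', mul_add]

theorem coeff_DGstar_zero : DGstar.coeff 0 = 8 := by
  simp [DGstar, X, X', Y, Y', U, U', V, V']

/-- `Δ_G ≠ ±Δ_{G*}`. -/
theorem genus2_deltas_differ : DG ≠ DGstar ∧ DG ≠ -DGstar :=
  ne_and_ne_neg_of_abs_coeff_ne (m := 0) (by rw [coeff_DG_zero, coeff_DGstar_zero]; norm_num)
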